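/- Let U = {1, u, v} and U' = {1, u', v'} where u, v, u', v' are unit-magnitude complex numbers with u ≠ ±1, v ≠ ±1, u ≠ ±v, u' ≠ ±1, v' ≠ ±1, u' ≠ ±v'. Write x = I_{u,v}(0,1) = a + bi and y = I_{u',v'}(0,1) = c + di with a, b, c, d ∈ ℝ. Then R(U) = R(U') if and only if either (b = d and a − c ∈ ℤ) or (b = −d and a + c ∈ ℤ). -/

import Mathlib

open Complex

/-- The bracket `[x,y] = x * conj y - y * conj x`. -/
noncomputable def brkt (x y : ℂ) : ℂ := x * (starRingEnd ℂ) y - y * (starRingEnd ℂ) x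

/-- `lineInt α β p q` is the intersection point `I_{α,β}(p,q)` of the line through `p`
with direction `α` and the line through `q` with direction `β` (for unit `α ≠ ±β`),
given by the formula of Buhler et al. -/
noncomputable def lineInt (α β p q : ℂ) : ℂ :=
  brkt α p / brkt α β * β + brkt β q / brkt β α * α

/-- The sets `S n` in the inductive construction. -/
def stepSet (U : Set ℂ) : ℕ → Set ℂ
  | 0 => {0, 1}
  | n + 1 => {z | ∃ α ∈ U, ∃ β ∈ U, α ≠ β ∧ α ≠ -β ∧
      ∃ p ∈ stepSet U n, ∃ q ∈ stepSet U n, z = lineInt α β p q}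

/-- `RU U = ⋃ n, S n`. -/
def RU (U : Set ℂ) : Set ℂ := ⋃ n, stepSet U n

/-- Elementary monomials of `U`. -/
def IsElem (U : Set ℂ) (z : ℂ) : Prop :=
  ∃ α ∈ U, ∃ β ∈ U, α ≠ β ∧ α ≠ -β ∧ z = lineInt α β 0 1

/-- Monomials of `U`, defined inductively. -/
inductive IsMonomial (U : Set ℂ) : ℂ → Prop
  | elementary (α β : ℂ) (hα : α ∈ U) (hβ : β ∈ U) (h1 : α ≠ β) (h2 : α ≠ -β) :
      IsMonomial U (lineInt α β 0 1)
  | step (α β m : ℂ) (hα : α ∈ U) (hβ : β ∈ U) (h1 : α ≠ β) (h2 : α ≠ -β)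
      (hm : IsMonomial U m) : IsMonomial U (lineInt α β 0 m)

/-- `P`: the real numbers arising as length-two monomials `I_{γ,δ}(0,z)` on the real axis. -/
def projSet (U : Set ℂ) : Set ℝ :=
  {r | ∃ γ ∈ U, ∃ δ ∈ U, γ ≠ δ ∧ γ ≠ -δ ∧ ∃ z, IsElem U z ∧ (r : ℂ) = lineInt γ δ 0 z}

/-- `m` is a `ℤ[P]`-linear combination of elementary monomials of `U`. -/
def IsZPComb (U : Set ℂ) (m : ℂ) : Prop :=
  ∃ (n : ℕ) (c : Fin n → ℝ) (z : Fin n → ℂ),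
    (∀ i, c i ∈ Subring.closure (projSet U)) ∧ (∀ i, IsElem U (z i)) ∧
    m = ∑ i, (c i : ℂ) * z i

/-! Write `ℓ_α(z) = [α, z]`; it vanishes exactly on the real multiples of `α`, so `I_{α,β}(p,q)` is
the unique `z` with `ℓ_α(z) = ℓ_α(p)` and `ℓ_β(z) = ℓ_β(q)`. For `X = I_{u,v}(0,1)` the vector `X`
is parallel to `u` and `X - 1` to `v`, so in the coordinates `z = s + tX` the three functionals
`ℓ_1, ℓ_u, ℓ_v` are nonzero multiples of `t`, `s` and `s + t`. Any two of these determine `(s, t)`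
over `ℤ`, hence `R({1,u,v})` stays inside the lattice `ℤ + ℤX`, and conversely `0, 1, X` generate
the whole lattice. Two such lattices with `X` non-real coincide iff `Y = k ± X` with `k ∈ ℤ`. -/

section Bracket

@[simp]
lemma brkt_self (x : ℂ) : brkt x x = 0 := by
  simp only [brkt, sub_self]

lemma brkt_swap (x y : ℂ) : brkt y x = -brkt x y := by
  simp only [brkt]; ring

@[simp]
lemma brkt_zero_right (x : ℂ) : brkt x 0 = 0 := by
  simp [brkt]

@[simp]
lemma brkt_add_right (x y z : ℂ) : brkt x (y + z) = brkt x y + brkt x z := by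
  simp only [brkt, map_add]; ring

@[simp]
lemma brkt_sub_right (x y z : ℂ) : brkt x (y - z) = brkt x y - brkt x z := by
  simp only [brkt, map_sub]; ring

@[simp]
lemma brkt_neg_right (x y : ℂ) : brkt x (-y) = -brkt x y := by
  simp only [brkt, map_neg]; ring

lemma brkt_swap_ne_zero {x y : ℂ} (h : brkt x y ≠ 0) : brkt y x ≠ 0 := by
  rw [brkt_swap]; exact neg_ne_zero.2 h

lemma brkt_mul_right_of_conj_eq {c : ℂ} (hc : starRingEnd ℂ c = c) (x y : ℂ) :
    brkt x (c * y) = c * brkt x y := by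
  simp only [brkt, map_mul, hc]; ring

@[simp]
lemma brkt_intCast_mul_right (x y : ℂ) (k : ℤ) : brkt x (k * y) = k * brkt x y :=
  brkt_mul_right_of_conj_eq (map_intCast _ k) x y

@[simp]
lemma brkt_intCast_right (x : ℂ) (k : ℤ) : brkt x k = k * brkt x 1 := by
  simpa using brkt_intCast_mul_right x 1 k

lemma conj_brkt (x y : ℂ) : starRingEnd ℂ (brkt x y) = -brkt x y := by
  simp only [brkt, map_sub, map_mul, conj_conj]; ring

lemma conj_brkt_div_brkt (x y z w : ℂ) :
    starRingEnd ℂ (brkt x y / brkt z w) = brkt x y / brkt z w := by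
  rw [map_div₀, conj_brkt, conj_brkt, neg_div_neg_eq]

lemma brkt_one_eq_zero_iff (z : ℂ) : brkt 1 z = 0 ↔ z.im = 0 := by
  rw [← conj_eq_iff_im, brkt, map_one, one_mul, mul_one, sub_eq_zero]

lemma brkt_mul_sub_brkt_mul (α β z : ℂ) : brkt α z * β - brkt β z * α = brkt α β * z := by
  simp only [brkt]; ring

lemma eq_zero_of_brkt_eq_zero {α β z : ℂ} (h : brkt α β ≠ 0) (hα : brkt α z = 0)
    (hβ : brkt β z = 0) : z = 0 := by
  have := brkt_mul_sub_brkt_mul α β z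
  rw [hα, hβ, zero_mul, zero_mul, sub_zero, eq_comm] at this
  exact (mul_eq_zero.1 this).resolve_left h

lemma brkt_ne_zero_of_norm_eq_one {α β : ℂ} (hα : ‖α‖ = 1) (hβ : ‖β‖ = 1) (h₁ : α ≠ β)
    (h₂ : α ≠ -β) : brkt α β ≠ 0 := by
  have hα₀ : α ≠ 0 := norm_ne_zero_iff.1 (by rw [hα]; exact one_ne_zero)
  have hβ₀ : β ≠ 0 := norm_ne_zero_iff.1 (by rw [hβ]; exact one_ne_zero)
  have conj_eq_inv {γ : ℂ} (hγ : ‖γ‖ = 1) : starRingEnd ℂ γ = γ⁻¹ := by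
    rw [inv_def, normSq_eq_norm_sq, hγ, one_pow, inv_one, ofReal_one, mul_one]
  rw [brkt, conj_eq_inv hα, conj_eq_inv hβ]
  intro h
  field_simp at h
  exact (sq_eq_sq_iff_eq_or_eq_neg.1 (by linear_combination h)).elim h₁ h₂

end Bracket

section Intersection

variable {α β : ℂ}

lemma lineInt_comm (α β p q : ℂ) : lineInt α β p q = lineInt β α q p := by
  rw [lineInt, lineInt, add_comm]

lemma brkt_lineInt_left (h : brkt α β ≠ 0) (p q : ℂ) :
    brkt α (lineInt α β p q) = brkt α p := by
  rw [lineInt, brkt_add_right, brkt_mul_right_of_conj_eq (conj_brkt_div_brkt _ _ _ _),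
    brkt_mul_right_of_conj_eq (conj_brkt_div_brkt _ _ _ _), brkt_self, mul_zero, add_zero,
    div_mul_cancel₀ _ h]

lemma brkt_lineInt_right (h : brkt α β ≠ 0) (p q : ℂ) :
    brkt β (lineInt α β p q) = brkt β q := by
  rw [lineInt_comm]
  exact brkt_lineInt_left (brkt_swap_ne_zero h) q p

lemma lineInt_eq_of_brkt {p q z : ℂ} (h : brkt α β ≠ 0) (hp : brkt α z = brkt α p)
    (hq : brkt β z = brkt β q) : lineInt α β p q = z :=
  sub_eq_zero.1 <| eq_zero_of_brkt_eq_zero h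
    (by rw [brkt_sub_right, brkt_lineInt_left h, hp, sub_self])
    (by rw [brkt_sub_right, brkt_lineInt_right h, hq, sub_self])

lemma lineInt_self (h : brkt α β ≠ 0) (p : ℂ) : lineInt α β p p = p :=
  lineInt_eq_of_brkt h rfl rfl

end Intersection

section Construction

variable {U : Set ℂ}

lemma lineInt_mem_stepSet_succ {α β p q : ℂ} {n : ℕ} (hα : α ∈ U) (hβ : β ∈ U)
    (h : brkt α β ≠ 0) (hp : p ∈ stepSet U n) (hq : q ∈ stepSet U n) :
    lineInt α β p q ∈ stepSet U (n + 1) := by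
  have h₁ : α ≠ β := fun e => h (e ▸ brkt_self α)
  have h₂ : α ≠ -β := fun e => h (by rw [e, brkt_swap, brkt_neg_right, brkt_self, neg_zero,
    neg_zero])
  exact ⟨α, hα, β, hβ, h₁, h₂, p, hp, q, hq, rfl⟩

lemma lineInt_mem_RU {α β p q : ℂ} (hα : α ∈ U) (hβ : β ∈ U) (h : brkt α β ≠ 0)
    (hp : p ∈ RU U) (hq : q ∈ RU U) : lineInt α β p q ∈ RU U := by
  have hmono : Monotone (stepSet U) := monotone_nat_of_le_succ fun n z hz =>
    lineInt_self h z ▸ lineInt_mem_stepSet_succ hα hβ h hz hz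
  obtain ⟨i, hi⟩ := Set.mem_iUnion.1 hp
  obtain ⟨j, hj⟩ := Set.mem_iUnion.1 hq
  exact Set.mem_iUnion_of_mem _ <| lineInt_mem_stepSet_succ hα hβ h
    (hmono (le_max_left i j) hi) (hmono (le_max_right i j) hj)

lemma mem_RU_of_brkt_eq {α β p q z : ℂ} (hα : α ∈ U) (hβ : β ∈ U) (h : brkt α β ≠ 0)
    (hp : p ∈ RU U) (hq : q ∈ RU U) (hpz : brkt α z = brkt α p) (hqz : brkt β z = brkt β q) :
    z ∈ RU U :=
  lineInt_eq_of_brkt h hpz hqz ▸ lineInt_mem_RU hα hβ h hp hq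

lemma zero_mem_RU : (0 : ℂ) ∈ RU U := Set.mem_iUnion_of_mem 0 (by simp [stepSet])

lemma one_mem_RU : (1 : ℂ) ∈ RU U := Set.mem_iUnion_of_mem 0 (by simp [stepSet])

end Construction

def intLattice (X : ℂ) : Set ℂ := {z | ∃ m n : ℤ, z = m + n * X}

section Lattice

variable {X Y : ℂ}

lemma self_mem_intLattice (X : ℂ) : X ∈ intLattice X := ⟨0, 1, by push_cast; ring⟩

lemma intLattice_subset_of_mem (h : Y ∈ intLattice X) : intLattice Y ⊆ intLattice X := by
  obtain ⟨m₀, n₀, rfl⟩ := h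
  rintro _ ⟨m, n, rfl⟩
  exact ⟨m + n * m₀, n * n₀, by push_cast; ring⟩

lemma intLattice_eq_intLattice_iff (hX : X.im ≠ 0) :
    intLattice X = intLattice Y ↔ (∃ k : ℤ, Y - X = k) ∨ ∃ k : ℤ, Y + X = k := by
  constructor
  · intro h
    obtain ⟨m, n, hY⟩ : Y ∈ intLattice X := h ▸ self_mem_intLattice Y
    obtain ⟨m', n', hX'⟩ : X ∈ intLattice Y := h ▸ self_mem_intLattice X
    have hn : n * n' = 1 := by
      have him := congrArg im hX'
      rw [hY] at him
      simp only [add_im, intCast_im, mul_im, intCast_re, zero_mul, add_zero, zero_add] at him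
      have : ((n * n' : ℤ) : ℝ) * X.im = 1 * X.im := by push_cast; linear_combination -him
      exact_mod_cast mul_right_cancel₀ hX this
    rcases Int.eq_one_or_neg_one_of_mul_eq_one hn with rfl | rfl
    · exact Or.inl ⟨m, by rw [hY]; push_cast; ring⟩
    · exact Or.inr ⟨m, by rw [hY]; push_cast; ring⟩
  · rintro (⟨k, hk⟩ | ⟨k, hk⟩) <;> apply Set.Subset.antisymm <;> apply intLattice_subset_of_mem
    · exact ⟨-k, 1, by push_cast; linear_combination -hk⟩
    · exact ⟨k, 1, by push_cast; linear_combination hk⟩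
    · exact ⟨k, -1, by push_cast; linear_combination hk⟩
    · exact ⟨k, -1, by push_cast; linear_combination hk⟩

end Lattice

section LatticeClosure

variable {u v X : ℂ} (huX : brkt u X = 0) (hvX : brkt v X = brkt v 1)
include huX hvX

lemma lineInt_mem_intLattice {α β p q : ℂ} (hα : α ∈ ({1, u, v} : Set ℂ))
    (hβ : β ∈ ({1, u, v} : Set ℂ)) (h : brkt α β ≠ 0) (hp : p ∈ intLattice X)
    (hq : q ∈ intLattice X) : lineInt α β p q ∈ intLattice X := by
  have coord_one (m n : ℤ) : brkt 1 (m + n * X) = n * brkt 1 X := by simp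
  have coord_u (m n : ℤ) : brkt u (m + n * X) = m * brkt u 1 := by simp [huX]
  have coord_v (m n : ℤ) : brkt v (m + n * X) = (m + n : ℤ) * brkt v 1 := by
    simp only [brkt_add_right, brkt_intCast_mul_right, brkt_intCast_right, hvX]
    push_cast
    ring
  obtain ⟨m, n, rfl⟩ := hp
  obtain ⟨m', n', rfl⟩ := hq
  simp only [Set.mem_insert_iff, Set.mem_singleton_iff] at hα hβ
  rcases hα with rfl | rfl | rfl <;> rcases hβ with rfl | rfl | rfl
  any_goals exact absurd (brkt_self _) h
  · exact ⟨m', n, lineInt_eq_of_brkt h (by rw [coord_one, coord_one]) (by rw [coord_u, coord_u])⟩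
  · exact ⟨m' + n' - n, n, lineInt_eq_of_brkt h (by rw [coord_one, coord_one])
      (by rw [coord_v, coord_v, sub_add_cancel])⟩
  · exact ⟨m, n', lineInt_eq_of_brkt h (by rw [coord_u, coord_u]) (by rw [coord_one, coord_one])⟩
  · exact ⟨m, m' + n' - m, lineInt_eq_of_brkt h (by rw [coord_u, coord_u])
      (by rw [coord_v, coord_v, add_sub_cancel])⟩
  · exact ⟨m + n - n', n', lineInt_eq_of_brkt h (by rw [coord_v, coord_v, sub_add_cancel])
      (by rw [coord_one, coord_one])⟩
  · exact ⟨m', m + n - m', lineInt_eq_of_brkt h (by rw [coord_v, coord_v, add_sub_cancel])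
      (by rw [coord_u, coord_u])⟩

lemma stepSet_subset_intLattice (hu : ‖u‖ = 1) (hv : ‖v‖ = 1) (n : ℕ) :
    stepSet {1, u, v} n ⊆ intLattice X := by
  induction n with
  | zero =>
    rintro z (rfl | rfl)
    exacts [⟨0, 0, by simp⟩, ⟨1, 0, by simp⟩]
  | succ n ih =>
    rintro _ ⟨α, hα, β, hβ, h₁, h₂, p, hp, q, hq, rfl⟩
    have hnorm : ∀ γ ∈ ({1, u, v} : Set ℂ), ‖γ‖ = 1 := by simp [hu, hv]
    exact lineInt_mem_intLattice huX hvX hα hβ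
      (brkt_ne_zero_of_norm_eq_one (hnorm α hα) (hnorm β hβ) h₁ h₂) (ih hp) (ih hq)

lemma intLattice_subset_RU (hu1 : brkt u 1 ≠ 0) (hv1 : brkt v 1 ≠ 0) (huv : brkt u v ≠ 0) :
    intLattice X ⊆ RU {1, u, v} := by
  have m1 : (1 : ℂ) ∈ ({1, u, v} : Set ℂ) := by simp
  have mu : u ∈ ({1, u, v} : Set ℂ) := by simp
  have mv : v ∈ ({1, u, v} : Set ℂ) := by simp
  have hX : X ∈ RU {1, u, v} :=
    mem_RU_of_brkt_eq mu mv huv zero_mem_RU one_mem_RU (by simp [huX]) (by simp [hvX])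
  have hint (k : ℤ) : (k : ℂ) ∈ RU {1, u, v} := by
    induction k using Int.inductionOn' (b := 0) with
    | zero => simpa using zero_mem_RU
    | succ k _ ih =>
      have hkX : (k : ℂ) + X ∈ RU {1, u, v} :=
        mem_RU_of_brkt_eq mu m1 hu1 ih hX (by simp [huX]) (by simp)
      exact mem_RU_of_brkt_eq mv m1 hv1 hkX zero_mem_RU (by simp [hvX]) (by simp)
    | pred k _ ih =>
      have hkX : (k : ℂ) - 1 + X ∈ RU {1, u, v} :=
        mem_RU_of_brkt_eq m1 mv (brkt_swap_ne_zero hv1) hX ih (by simp) (by simp [hvX])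
      exact mem_RU_of_brkt_eq mu m1 hu1 hkX zero_mem_RU (by simp [huX]) (by simp)
  rintro _ ⟨m, n, rfl⟩
  have hnX : (n : ℂ) * X ∈ RU {1, u, v} :=
    mem_RU_of_brkt_eq mv mu (brkt_swap_ne_zero huv) (hint n) zero_mem_RU (by simp [hvX])
      (by simp [huX])
  exact mem_RU_of_brkt_eq mu m1 hu1 (hint m) hnX (by simp [huX]) (by simp)

lemma im_ne_zero_of_brkt (hu1 : brkt u 1 ≠ 0) (hv1 : brkt v 1 ≠ 0) : X.im ≠ 0 := by
  intro hX
  have hX0 : X = 0 := eq_zero_of_brkt_eq_zero hu1 huX ((brkt_one_eq_zero_iff X).2 hX)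
  rw [hX0, brkt_zero_right] at hvX
  exact hv1 hvX.symm

end LatticeClosure

section UnitDirections

variable {u v : ℂ} (hu : ‖u‖ = 1) (hv : ‖v‖ = 1) (hu1 : u ≠ 1) (hu1' : u ≠ -1) (hv1 : v ≠ 1)
  (hv1' : v ≠ -1) (huv : u ≠ v) (huv' : u ≠ -v)
include hu hv hu1 hu1' hv1 hv1' huv huv'

lemma RU_eq_intLattice : RU {1, u, v} = intLattice (lineInt u v 0 1) := by
  have huv₀ := brkt_ne_zero_of_norm_eq_one hu hv huv huv'
  have huX : brkt u (lineInt u v 0 1) = 0 := by rw [brkt_lineInt_left huv₀, brkt_zero_right]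
  have hvX := brkt_lineInt_right huv₀ 0 1
  exact (Set.iUnion_subset (stepSet_subset_intLattice huX hvX hu hv)).antisymm
    (intLattice_subset_RU huX hvX (brkt_ne_zero_of_norm_eq_one hu norm_one hu1 hu1')
      (brkt_ne_zero_of_norm_eq_one hv norm_one hv1 hv1') huv₀)

lemma im_lineInt_ne_zero : (lineInt u v 0 1).im ≠ 0 := by
  have huv₀ := brkt_ne_zero_of_norm_eq_one hu hv huv huv'
  exact im_ne_zero_of_brkt (by rw [brkt_lineInt_left huv₀, brkt_zero_right])
    (brkt_lineInt_right huv₀ 0 1) (brkt_ne_zero_of_norm_eq_one hu norm_one hu1 hu1')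
    (brkt_ne_zero_of_norm_eq_one hv norm_one hv1 hv1')

end UnitDirections

lemma exists_intCast_eq_sub_or_add_iff (a b c d : ℝ) :
    ((∃ k : ℤ, (c + d * I : ℂ) - (a + b * I) = k) ∨ ∃ k : ℤ, (c + d * I : ℂ) + (a + b * I) = k) ↔
      (b = d ∧ ∃ m : ℤ, a - c = m) ∨ (b = -d ∧ ∃ m : ℤ, a + c = m) := by
  simp only [Complex.ext_iff, sub_re, add_re, ofReal_re, mul_re, I_re, mul_zero, ofReal_im, I_im,
    mul_one, sub_self, add_zero, intCast_re, sub_im, add_im, mul_im, zero_add, intCast_im,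
    exists_and_right]
  refine or_congr ⟨?_, ?_⟩ ⟨?_, ?_⟩
  · rintro ⟨⟨k, hk⟩, hdb⟩
    exact ⟨by linarith, -k, by push_cast; linarith⟩
  · rintro ⟨hbd, k, hk⟩
    exact ⟨⟨-k, by push_cast; linarith⟩, by linarith⟩
  · rintro ⟨⟨k, hk⟩, hdb⟩
    exact ⟨by linarith, k, by linarith⟩
  · rintro ⟨hbd, k, hk⟩
    exact ⟨⟨k, by linarith⟩, by linarith⟩

/-- with `x = I_{u,v}(0,1) = a + bi` and `y = I_{u',v'}(0,1) = c + di`,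
`R({1,u,v}) = R({1,u',v'})` iff (`b = d` and `a − c ∈ ℤ`) or (`b = −d` and `a + c ∈ ℤ`). -/
theorem stmt6 (u v u' v' : ℂ)
    (hu : ‖u‖ = 1) (hv : ‖v‖ = 1)
    (hu' : ‖u'‖ = 1) (hv' : ‖v'‖ = 1)
    (hu1 : u ≠ 1) (hu1' : u ≠ -1) (hv1 : v ≠ 1) (hv1' : v ≠ -1)
    (huv : u ≠ v) (huv' : u ≠ -v)
    (hu'1 : u' ≠ 1) (hu'1' : u' ≠ -1) (hv'1 : v' ≠ 1) (hv'1' : v' ≠ -1)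
    (hu'v' : u' ≠ v') (hu'v'' : u' ≠ -v')
    (a b c d : ℝ)
    (hx : lineInt u v 0 1 = (a : ℂ) + (b : ℂ) * Complex.I)
    (hy : lineInt u' v' 0 1 = (c : ℂ) + (d : ℂ) * Complex.I) :
    RU {1, u, v} = RU {1, u', v'} ↔
      ((b = d ∧ ∃ m : ℤ, a - c = (m : ℝ)) ∨ (b = -d ∧ ∃ m : ℤ, a + c = (m : ℝ))) := by
  rw [RU_eq_intLattice hu hv hu1 hu1' hv1 hv1' huv huv',
    RU_eq_intLattice hu' hv' hu'1 hu'1' hv'1 hv'1' hu'v' hu'v'',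
    intLattice_eq_intLattice_iff (im_lineInt_ne_zero hu hv hu1 hu1' hv1 hv1' huv huv'), hx, hy]
  exact exists_intCast_eq_sub_or_add_iff a b c d
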